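/- Let P be a finite poset with |P| = n and let e : P → {1,…,n} be a linear extension (an order-preserving bijection). Let J(P) be the distributive lattice of lower sets of P ordered by inclusion, whose covers are I ⋖ I ∪ {x} for x ∉ I with I ∪ {x} a lower set, and label each such cover by λ_e(I, I ∪ {x}) = e(x). Let Lin(P,e) ⊆ Sₙ be the set of permutations obtained as label sequences of maximal chains of J(P) under λ_e, read in one-line notation. Then λ_e is an EL-labeling of J(P), Lin(P,e) is a lower set of the weak order on Sₙ, and the map m ↦ λ_e(m) is an order isomorphism from the maximal chain descent order C(J(P), λ_e) onto Lin(P,e) equipped with the partial order induced from the weak order on Sₙ. -/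

import Mathlib

/-- A maximal chain of a bounded poset `P`, recorded as a saturated chain
(a list of elements whose consecutive entries are covers) from `⊥` to `⊤`. -/
structure MaxChain (P : Type*) [PartialOrder P] [BoundedOrder P] where
  elems : List P
  chain' : elems.Chain' (· ⋖ ·)
  head_bot : elems.head? = some ⊥
  last_top : elems.getLast? = some ⊤

variable {P : Type*} [PartialOrder P] [BoundedOrder P]
variable {Λ : Type*} [PartialOrder Λ]

/-- `c` is a saturated chain from `x` to `y`. -/
def IsSatChain (c : List P) (x y : P) : Prop :=
  c.Chain' (· ⋖ ·) ∧ c.head? = some x ∧ c.getLast? = some y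

/-- The label sequence of a saturated chain with respect to the edge
labeling `lab`. -/
def labelSeq (lab : P → P → Λ) (c : List P) : List Λ :=
  List.zipWith lab c c.tail

/-- The chain `c` is ascending: its label sequence weakly increases. -/
def AscLabels (lab : P → P → Λ) (c : List P) : Prop :=
  (labelSeq lab c).Chain' (· ≤ ·)

/-- `lab` is an EL-labeling: every closed interval has a unique ascending
maximal chain which lexicographically strictly precedes all other maximal
chains of that interval. -/
def IsELLabeling (lab : P → P → Λ) : Prop :=
  ∀ x y : P, x < y →
    (∃! c : List P, IsSatChain c x y ∧ AscLabels lab c) ∧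
    (∀ c c' : List P, IsSatChain c x y → IsSatChain c' x y →
      AscLabels lab c → c ≠ c' →
      List.Lex (· < ·) (labelSeq lab c) (labelSeq lab c'))

/-- `m` increases by a polygon move to `m'`: they differ by a polygon over some
interval `[x,y]` (with `m' ∩ (x,y) = {w}` a single new element), the part of `m`
in `[x,y]` is ascending (hence, for an EL-labeling, it is the unique ascending
chain of `[x,y]`), and `x ⋖ w ⋖ y` is a descent at `w`. -/
def ELPolygonMove (lab : P → P → Λ) (m m' : MaxChain P) : Prop :=
  ∃ (a c b : List P) (x w y : P),
    m.elems = a ++ x :: (c ++ y :: b) ∧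
    m'.elems = a ++ x :: w :: y :: b ∧
    c ≠ [] ∧ w ∉ c ∧
    AscLabels lab (x :: (c ++ [y])) ∧
    ¬ lab x w ≤ lab w y

/-- The maximal chain descent order `C(P,λ)`: the reflexive–transitive closure
of increase by polygon moves. -/
def ELCDLe (lab : P → P → Λ) (m m' : MaxChain P) : Prop :=
  Relation.ReflTransGen (ELPolygonMove lab) m m'

/-- Strict order of the maximal chain descent order. -/
def ELCDLt (lab : P → P → Λ) (m m' : MaxChain P) : Prop :=
  ELCDLe lab m m' ∧ m ≠ m'

/-- `m'` covers `m` in the maximal chain descent order. -/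
def ELCDCovBy (lab : P → P → Λ) (m m' : MaxChain P) : Prop :=
  ELCDLt lab m m' ∧ ∀ z : MaxChain P, ELCDLt lab m z → ¬ ELCDLt lab z m'

/-- `lab` is polygon complete: every polygon move gives a cover relation. -/
def ELPolygonComplete (lab : P → P → Λ) : Prop :=
  ∀ m m' : MaxChain P, ELPolygonMove lab m m' → ELCDCovBy lab m m'

/-- `lab` is a polygon strong EL-labeling: for every descent `x ⋖ y ⋖ z`,
the label `λ(y,z)` is strictly smaller than the label `λ(y',z)`, where `y'` is
the coatom of `[x,z]` lying on the unique ascending maximal chain of `[x,z]`. -/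
def PolygonStrong (lab : P → P → Λ) : Prop :=
  ∀ x y z y' : P, x ⋖ y → y ⋖ z → ¬ lab x y ≤ lab y z →
    ∀ c : List P, IsSatChain c x z → AscLabels lab c → [y', z] <:+ c →
      lab y z < lab y' z

/-- The inversion set of a word `l` (read as the one-line notation of a
permutation): pairs of values `a < b` of `l` such that `b` occurs before `a`
in `l`. -/
def InvW {α : Type*} [LinearOrder α] (l : List α) : Set (α × α) :=
  {p | p.1 ∈ l ∧ p.2 ∈ l ∧ p.1 < p.2 ∧ l.idxOf p.2 < l.idxOf p.1}

namespace S19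
open List

lemma mem_invW {α : Type*} [LinearOrder α] {l : List α} {u v : α} :
    (u, v) ∈ InvW l ↔ u ∈ l ∧ v ∈ l ∧ u < v ∧ l.idxOf v < l.idxOf u := Iff.rfl

lemma invW_cons {α : Type*} [LinearOrder α] {h : α} {t : List α} {u v : α}
    (hu : u ≠ h) (hv : v ≠ h) : ((u, v) ∈ InvW (h :: t) ↔ (u, v) ∈ InvW t) := by
  simp only [mem_invW, mem_cons, idxOf_cons_ne t hu.symm, idxOf_cons_ne t hv.symm]
  constructor
  · rintro ⟨hu', hv', h1, h2⟩
    exact ⟨hu'.resolve_left hu, hv'.resolve_left hv, h1, by omega⟩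
  · rintro ⟨hu', hv', h1, h2⟩
    exact ⟨Or.inr hu', Or.inr hv', h1, by omega⟩

lemma eq_of_invW {α : Type*} [LinearOrder α] :
    ∀ {l l' : List α}, l.Nodup → l'.Nodup → (∀ z, z ∈ l ↔ z ∈ l') →
      InvW l = InvW l' → l = l'
  | [], [], _, _, _, _ => rfl
  | [], h' :: t', _, _, hm, _ => absurd ((hm h').mpr (by simp)) (by simp)
  | h :: t, [], _, _, hm, _ => absurd ((hm h).mp (by simp)) (by simp)
  | h :: t, h' :: t', hnd, hnd', hm, hI => by
    have hht : h ∉ t := (nodup_cons.mp hnd).1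
    have hht' : h' ∉ t' := (nodup_cons.mp hnd').1
    have hh : h = h' := by
      by_contra hne
      rcases lt_or_gt_of_ne hne with hlt | hlt
      · have h1 : (h, h') ∈ InvW (h' :: t') := by
          simp only [mem_invW]
          refine ⟨(hm h).mp (by simp), by simp, hlt, ?_⟩
          rw [idxOf_cons_self, idxOf_cons_ne t' (Ne.symm hne)]
          omega
        rw [← hI] at h1
        simp only [mem_invW] at h1
        have := h1.2.2.2
        rw [idxOf_cons_self] at this
        omega
      · have h1 : (h', h) ∈ InvW (h :: t) := by
          simp only [mem_invW]
          refine ⟨(hm h').mpr (by simp), by simp, hlt, ?_⟩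
          rw [idxOf_cons_self, idxOf_cons_ne t hne]
          omega
        rw [hI] at h1
        simp only [mem_invW] at h1
        have := h1.2.2.2
        rw [idxOf_cons_self] at this
        omega
    subst hh
    have hmt : ∀ z, z ∈ t ↔ z ∈ t' := by
      intro z
      constructor
      · intro hz
        have hzh : z ≠ h := fun e => hht (e ▸ hz)
        rcases mem_cons.mp ((hm z).mp (mem_cons_of_mem _ hz)) with e | e
        · exact absurd e hzh
        · exact e
      · intro hz
        have hzh : z ≠ h := fun e => hht' (e ▸ hz)
        rcases mem_cons.mp ((hm z).mpr (mem_cons_of_mem _ hz)) with e | e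
        · exact absurd e hzh
        · exact e
    have hIt : InvW t = InvW t' := by
      ext ⟨u, v⟩
      by_cases hu : u ∈ t
      · by_cases hv : v ∈ t
        · have hun : u ≠ h := fun e => hht (e ▸ hu)
          have hvn : v ≠ h := fun e => hht (e ▸ hv)
          rw [← invW_cons hun hvn, hI, invW_cons hun hvn]
        · constructor
          · rintro ⟨_, hv', _, _⟩; exact absurd hv' hv
          · rintro ⟨_, hv', _, _⟩; exact absurd hv' (fun h2 => hv ((hmt v).mpr h2))
      · constructor
        · rintro ⟨hu', _, _, _⟩; exact absurd hu' hu
        · rintro ⟨hu', _, _, _⟩; exact absurd hu' (fun h2 => hu ((hmt u).mpr h2))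
    rw [eq_of_invW (nodup_cons.mp hnd).2 (nodup_cons.mp hnd').2 hmt hIt]


lemma invW_swap {α : Type*} [LinearOrder α] {A B : List α} {p r : α} (hpr : p < r)
    (hnd : (A ++ p :: r :: B).Nodup) :
    InvW (A ++ r :: p :: B) = InvW (A ++ p :: r :: B) ∪ {(p, r)} := by
  have hprne : p ≠ r := ne_of_lt hpr
  obtain ⟨hA, hc, hdisj⟩ := List.nodup_append'.mp hnd
  have hpA : p ∉ A := fun h => hdisj h (by simp)
  have hrA : r ∉ A := fun h => hdisj h (by simp)
  have hperm : (A ++ p :: r :: B) ~ (A ++ r :: p :: B) := (Perm.swap r p B).append_left A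
  have hm : ∀ z : α, z ∈ A ++ r :: p :: B ↔ z ∈ A ++ p :: r :: B :=
    fun z => ⟨fun h => hperm.symm.subset h, fun h => hperm.subset h⟩
  have hnd₂ : (A ++ r :: p :: B).Nodup := hperm.nodup_iff.mp hnd
  have mem₁p : p ∈ A ++ p :: r :: B := by simp
  have mem₁r : r ∈ A ++ p :: r :: B := by simp
  have mem₂p : p ∈ A ++ r :: p :: B := by simp
  have mem₂r : r ∈ A ++ r :: p :: B := by simp
  have i1p : (A ++ p :: r :: B).idxOf p = A.length := by
    rw [idxOf_append_of_notMem hpA, idxOf_cons_self]; omega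
  have i1r : (A ++ p :: r :: B).idxOf r = A.length + 1 := by
    rw [idxOf_append_of_notMem hrA, idxOf_cons_ne _ hprne, idxOf_cons_self]
  have i2r : (A ++ r :: p :: B).idxOf r = A.length := by
    rw [idxOf_append_of_notMem hrA, idxOf_cons_self]; omega
  have i2p : (A ++ r :: p :: B).idxOf p = A.length + 1 := by
    rw [idxOf_append_of_notMem hpA, idxOf_cons_ne _ (Ne.symm hprne), idxOf_cons_self]
  have ieq : ∀ z, z ≠ p → z ≠ r → (A ++ p :: r :: B).idxOf z = (A ++ r :: p :: B).idxOf z := by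
    intro z hzp hzr
    by_cases hzA : z ∈ A
    · rw [idxOf_append_of_mem hzA, idxOf_append_of_mem hzA]
    · rw [idxOf_append_of_notMem hzA, idxOf_append_of_notMem hzA,
        idxOf_cons_ne _ (Ne.symm hzp), idxOf_cons_ne _ (Ne.symm hzr),
        idxOf_cons_ne _ (Ne.symm hzr), idxOf_cons_ne _ (Ne.symm hzp)]
  have hne₁p : ∀ z, z ∈ A ++ p :: r :: B → z ≠ p → (A ++ p :: r :: B).idxOf z ≠ A.length :=
    fun z hz hzp h => hzp ((idxOf_inj hz).mp (by rw [h, i1p]))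
  have hne₁r : ∀ z, z ∈ A ++ p :: r :: B → z ≠ r → (A ++ p :: r :: B).idxOf z ≠ A.length + 1 :=
    fun z hz hzr h => hzr ((idxOf_inj hz).mp (by rw [h, i1r]))
  have hne₂p : ∀ z, z ∈ A ++ r :: p :: B → z ≠ p → (A ++ r :: p :: B).idxOf z ≠ A.length + 1 :=
    fun z hz hzp h => hzp ((idxOf_inj hz).mp (by rw [h, i2p]))
  have hne₂r : ∀ z, z ∈ A ++ r :: p :: B → z ≠ r → (A ++ r :: p :: B).idxOf z ≠ A.length :=
    fun z hz hzr h => hzr ((idxOf_inj hz).mp (by rw [h, i2r]))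
  ext ⟨u, v⟩
  simp only [Set.mem_union, Set.mem_singleton_iff, mem_invW, Prod.mk.injEq]
  constructor
  · rintro ⟨hu, hv, huv, hidx⟩
    rcases eq_or_ne u p with hequ | hup
    · subst hequ
      rcases eq_or_ne v r with heqv | hvr
      · subst heqv
        exact Or.inr ⟨rfl, rfl⟩
      · have hvp : v ≠ u := ne_of_gt huv
        refine Or.inl ⟨mem₁p, (hm v).mp hv, huv, ?_⟩
        have e1 := ieq v hvp hvr
        have e2 := hne₂r v hv hvr
        omega
    · rcases eq_or_ne u r with hequ | hur
      · subst hequ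
        have hvp : v ≠ p := fun h => absurd (h ▸ huv) (not_lt_of_gt hpr)
        have hvr : v ≠ u := ne_of_gt huv
        refine Or.inl ⟨mem₁r, (hm v).mp hv, huv, ?_⟩
        have e1 := ieq v hvp hvr
        have e2 := hne₂r v hv hvr
        omega
      · rcases eq_or_ne v p with heqv | hvp
        · subst heqv
          refine Or.inl ⟨(hm u).mp hu, mem₁p, huv, ?_⟩
          have e1 := ieq u hup hur
          have e2 := hne₂r u hu hur
          omega
        · rcases eq_or_ne v r with heqv | hvr
          · subst heqv
            refine Or.inl ⟨(hm u).mp hu, mem₁r, huv, ?_⟩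
            have e1 := ieq u hup hur
            have e2 := hne₂p u hu hup
            omega
          · refine Or.inl ⟨(hm u).mp hu, (hm v).mp hv, huv, ?_⟩
            have e1 := ieq u hup hur
            have e2 := ieq v hvp hvr
            omega
  · rintro (⟨hu, hv, huv, hidx⟩ | ⟨hequ, heqv⟩)
    · rcases eq_or_ne u p with hequ | hup
      · subst hequ
        have hvr : v ≠ r := by
          intro h; subst h
          omega
        have hvp : v ≠ u := ne_of_gt huv
        refine ⟨mem₂p, (hm v).mpr hv, huv, ?_⟩
        have e1 := ieq v hvp hvr
        have e2 := hne₁r v hv hvr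
        omega
      · rcases eq_or_ne u r with hequ | hur
        · subst hequ
          have hvp : v ≠ p := fun h => absurd (h ▸ huv) (not_lt_of_gt hpr)
          have hvr : v ≠ u := ne_of_gt huv
          refine ⟨mem₂r, (hm v).mpr hv, huv, ?_⟩
          have e1 := ieq v hvp hvr
          have e2 := hne₁p v hv hvp
          omega
        · rcases eq_or_ne v p with heqv | hvp
          · subst heqv
            refine ⟨(hm u).mpr hu, mem₂p, huv, ?_⟩
            have e1 := ieq u hup hur
            have e2 := hne₁r u hu hur
            omega
          · rcases eq_or_ne v r with heqv | hvr
            · subst heqv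
              refine ⟨(hm u).mpr hu, mem₂r, huv, ?_⟩
              have e1 := ieq u hup hur
              have e2 := hne₁p u hu hup
              omega
            · refine ⟨(hm u).mpr hu, (hm v).mpr hv, huv, ?_⟩
              have e1 := ieq u hup hur
              have e2 := ieq v hvp hvr
              omega
    · subst hequ; subst heqv
      exact ⟨mem₂p, mem₂r, hpr, by omega⟩


lemma adj_decomp {α : Type*} [DecidableEq α] {l : List α} {p r : α} (hp : p ∈ l) (hr : r ∈ l)
    (h : l.idxOf r = l.idxOf p + 1) :
    l = l.take (l.idxOf p) ++ p :: r :: l.drop (l.idxOf p + 1 + 1) := by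
  have hip : l.idxOf p < l.length := idxOf_lt_length_iff.mpr hp
  have hir : l.idxOf r < l.length := idxOf_lt_length_iff.mpr hr
  have d1 : l.drop (l.idxOf p) = p :: l.drop (l.idxOf p + 1) := by
    rw [drop_eq_getElem_cons hip, getElem_idxOf hip]
  have d2 : l.drop (l.idxOf r) = r :: l.drop (l.idxOf r + 1) := by
    rw [drop_eq_getElem_cons hir, getElem_idxOf hir]
  rw [h] at d2
  conv_lhs => rw [← take_append_drop (l.idxOf p) l, d1, d2]

lemma exists_adjacent {α : Type*} [LinearOrder α] {l l' : List α} (hnd : l.Nodup)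
    (hml : ∀ z : α, z ∈ l) (hml' : ∀ z : α, z ∈ l')
    (hsub : InvW l ⊆ InvW l') :
    ∀ (g : ℕ) (a b : α), (a, b) ∈ InvW l' → (a, b) ∉ InvW l →
      l.idxOf b ≤ l.idxOf a + g →
      ∃ A p r B, l = A ++ p :: r :: B ∧ p < r ∧ (p, r) ∈ InvW l' ∧ (p, r) ∉ InvW l := by
  intro g
  induction g with
  | zero =>
    intro a b hab hnab hg
    obtain ⟨ha', hb', hlt, hidx'⟩ := mem_invW.mp hab
    have hne : a ≠ b := ne_of_lt hlt
    have h1 : ¬ (l.idxOf b < l.idxOf a) :=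
      fun h => hnab (mem_invW.mpr ⟨hml a, hml b, hlt, h⟩)
    have h2 : l.idxOf a ≠ l.idxOf b := fun h => hne ((idxOf_inj (hml a)).mp h)
    omega
  | succ g ih =>
    intro a b hab hnab hg
    obtain ⟨ha', hb', hlt, hidx'⟩ := mem_invW.mp hab
    have hne : a ≠ b := ne_of_lt hlt
    have h1 : ¬ (l.idxOf b < l.idxOf a) :=
      fun h => hnab (mem_invW.mpr ⟨hml a, hml b, hlt, h⟩)
    have h2 : l.idxOf a ≠ l.idxOf b := fun h => hne ((idxOf_inj (hml a)).mp h)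
    have iab : l.idxOf a < l.idxOf b := by omega
    have hib : l.idxOf b < l.length := idxOf_lt_length_iff.mpr (hml b)
    by_cases hadj : l.idxOf b = l.idxOf a + 1
    · exact ⟨l.take (l.idxOf a), a, b, l.drop (l.idxOf a + 1 + 1),
        adj_decomp (hml a) (hml b) hadj, hlt, hab, hnab⟩
    · have hc : l.idxOf a + 1 < l.length := by omega
      set c := l[l.idxOf a + 1]'hc with hcdef
      have icc : l.idxOf c = l.idxOf a + 1 := hnd.idxOf_getElem _ hc
      have hca : c ≠ a := fun h => by rw [h] at icc; omega
      have hcb : c ≠ b := fun h => by rw [h] at icc; omega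
      rcases lt_trichotomy c a with hlt1 | heq1 | hgt1
      · have hca' : (c, a) ∈ InvW l := mem_invW.mpr ⟨hml c, hml a, hlt1, by omega⟩
        have hca'' := (mem_invW.mp (hsub hca')).2.2.2
        have hcb' : (c, b) ∈ InvW l' :=
          mem_invW.mpr ⟨hml' c, hml' b, lt_trans hlt1 hlt, by omega⟩
        have hcbn : (c, b) ∉ InvW l := fun h => by
          have := (mem_invW.mp h).2.2.2
          omega
        exact ih c b hcb' hcbn (by omega)
      · exact absurd heq1 hca
      · rcases lt_trichotomy c b with hlt2 | heq2 | hgt2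
        · by_cases hac : (a, c) ∈ InvW l'
          · have hacn : (a, c) ∉ InvW l := fun h => by
              have := (mem_invW.mp h).2.2.2
              omega
            exact ⟨l.take (l.idxOf a), a, c, l.drop (l.idxOf a + 1 + 1),
              adj_decomp (hml a) (hml c) icc, hgt1, hac, hacn⟩
          · have hac' : l'.idxOf a < l'.idxOf c := by
              have h3 : ¬ (l'.idxOf c < l'.idxOf a) :=
                fun h => hac (mem_invW.mpr ⟨hml' a, hml' c, hgt1, h⟩)
              have h4 : l'.idxOf a ≠ l'.idxOf c :=
                fun h => (Ne.symm hca) ((idxOf_inj (hml' a)).mp h)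
              omega
            have hcb' : (c, b) ∈ InvW l' := mem_invW.mpr ⟨hml' c, hml' b, hlt2, by omega⟩
            have hcbn : (c, b) ∉ InvW l := fun h => by
              have := (mem_invW.mp h).2.2.2
              omega
            exact ih c b hcb' hcbn (by omega)
        · exact absurd heq2 hcb
        · have hbc : (b, c) ∈ InvW l := mem_invW.mpr ⟨hml b, hml c, hgt2, by omega⟩
          have hbc' := (mem_invW.mp (hsub hbc)).2.2.2
          have hac' : (a, c) ∈ InvW l' :=
            mem_invW.mpr ⟨hml' a, hml' c, lt_trans hlt hgt2, by omega⟩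
          have hacn : (a, c) ∉ InvW l := fun h => by
            have := (mem_invW.mp h).2.2.2
            omega
          exact ⟨l.take (l.idxOf a), a, c, l.drop (l.idxOf a + 1 + 1),
            adj_decomp (hml a) (hml c) icc, lt_trans hlt hgt2, hac', hacn⟩


lemma exists_adjacent' {α : Type*} [LinearOrder α] {l l' : List α} (hnd : l.Nodup)
    (hml : ∀ z : α, z ∈ l) (hml' : ∀ z : α, z ∈ l')
    (hsub : InvW l ⊆ InvW l') {a b : α} (hab : (a, b) ∈ InvW l') (hnab : (a, b) ∉ InvW l) :
    ∃ A p r B, l = A ++ p :: r :: B ∧ p < r ∧ (p, r) ∈ InvW l' ∧ (p, r) ∉ InvW l :=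
  exists_adjacent hnd hml hml' hsub (l.idxOf b) a b hab hnab (Nat.le_add_left _ _)

lemma indexOf_instirrel {α : Type*} (i1 i2 : DecidableEq α) (l : List α) (a : α) :
    @List.idxOf α (@instBEqOfDecidableEq α i1) a l
      = @List.idxOf α (@instBEqOfDecidableEq α i2) a l := by
  rw [Subsingleton.elim i1 i2]

lemma mem_invW_fin {n : ℕ} {l : List (Fin n)} {u v : Fin n} :
    (u, v) ∈ InvW l ↔ u ∈ l ∧ v ∈ l ∧ u < v ∧ l.idxOf v < l.idxOf u := by
  simp only [InvW, Set.mem_setOf_eq, indexOf_instirrel _ (instDecidableEqFin n)]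


open List

lemma maxChain_ext {m m' : MaxChain P} (h : m.elems = m'.elems) : m = m' := by
  cases m; cases m'; cases h; rfl

lemma sorted_lex_min {α : Type*} [LinearOrder α] :
    ∀ {l l' : List α}, l.Pairwise (· ≤ ·) → l.Nodup → l ~ l' → l ≠ l' →
      List.Lex (· < ·) l l'
  | [], l', _, _, hp, hne => absurd hp.nil_eq hne
  | h :: t, [], _, _, hp, _ => absurd hp.symm.nil_eq (by simp)
  | h :: t, h' :: t', hs, hnd, hp, hne => by
    by_cases hh : h = h'
    · subst hh
      exact List.Lex.cons (sorted_lex_min hs.tail hnd.tail hp.cons_inv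
        (fun ht => hne (by rw [ht])))
    · have hmem : h' ∈ h :: t := hp.symm.subset (by simp)
      have h't : h' ∈ t := by
        rcases List.mem_cons.mp hmem with h1 | h1
        · exact absurd h1.symm hh
        · exact h1
      have : h ≤ h' := List.rel_of_pairwise_cons hs h't
      exact List.Lex.rel (lt_of_le_of_ne this hh)

lemma indexOf_map {α β : Type*} [DecidableEq α] [DecidableEq β] {g : α → β}
    (hg : Function.Injective g) (l : List α) (a : α) :
    (l.map g).idxOf (g a) = l.idxOf a := by
  induction l with
  | nil => rfl
  | cons h t ih =>
    simp only [map_cons, idxOf_cons, ih]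
    rw [show (g h == g a) = (h == a) by simp [hg.eq_iff]]

lemma labelSeq_cons₂ {P' Λ' : Type*} (lab : P' → P' → Λ') (a b : P') (l : List P') :
    labelSeq lab (a :: b :: l) = lab a b :: labelSeq lab (b :: l) := rfl

lemma labelSeq_append {P' Λ' : Type*} (lab : P' → P' → Λ') :
    ∀ (u : List P') (x : P') (v : List P'),
      labelSeq lab (u ++ x :: v) = labelSeq lab (u ++ [x]) ++ labelSeq lab (x :: v)
  | [], x, v => rfl
  | [a], x, v => rfl
  | a :: b :: u, x, v => by
    have := labelSeq_append lab (b :: u) x v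
    simp only [cons_append, labelSeq_cons₂] at *
    rw [this]

section Poset

variable {γ : Type*} [PartialOrder γ] [Fintype γ]

lemma cover_of_insert {I J : LowerSet γ} {x : γ} (hx : x ∉ I)
    (hmem : ∀ z, z ∈ J ↔ z ∈ I ∨ z = x) : I ⋖ J := by
  have hle : I ≤ J := fun z hz => (hmem z).mpr (Or.inl hz)
  have hxJ : x ∈ J := (hmem x).mpr (Or.inr rfl)
  constructor
  · exact lt_of_le_of_ne hle (fun h => hx (h ▸ hxJ))
  · intro K hIK hKJ
    obtain ⟨z, hzK, hzI⟩ := Set.exists_of_ssubset (LowerSet.coe_ssubset_coe.mpr hIK)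
    have hzJ : z ∈ J := hKJ.le hzK
    have hzx : z = x := ((hmem z).mp hzJ).resolve_left hzI
    have : J ≤ K := by
      intro y hy
      rcases (hmem y).mp hy with h | h
      · exact hIK.le h
      · exact h ▸ (hzx ▸ hzK)
    exact absurd (lt_of_lt_of_le hKJ this) (lt_irrefl K)

lemma exists_insert_of_cover {I J : LowerSet γ} (h : I ⋖ J) :
    ∃ x, x ∉ I ∧ ∀ z, z ∈ J ↔ z ∈ I ∨ z = x := by
  classical
  obtain ⟨z0, hz0J, hz0I⟩ := Set.exists_of_ssubset (LowerSet.coe_ssubset_coe.mpr h.1)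
  set S : Finset γ := Finset.univ.filter (fun z => z ∈ J ∧ z ∉ I) with hS
  obtain ⟨x, hxS, hxmin⟩ := S.exists_minimal ⟨z0, by simp only [hS, Finset.mem_filter, Finset.mem_univ, true_and]; exact ⟨hz0J, hz0I⟩⟩
  rw [hS, Finset.mem_filter] at hxS
  obtain ⟨-, hxJ, hxI⟩ := hxS
  have hKle : I ⊔ LowerSet.Iic x ≤ J := by
    refine sup_le h.1.le ?_
    intro z hz
    exact J.lower (LowerSet.mem_Iic_iff.mp hz) hxJ
  have hKlt : I < I ⊔ LowerSet.Iic x := by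
    refine lt_of_le_of_ne le_sup_left (fun hEq => hxI ?_)
    have : x ∈ I ⊔ LowerSet.Iic x := by simp
    rwa [← hEq] at this
  have hKJ : I ⊔ LowerSet.Iic x = J := by
    rcases (lt_or_eq_of_le hKle) with hlt | heq
    · exact absurd hlt (h.2 hKlt)
    · exact heq
  refine ⟨x, hxI, fun z => ?_⟩
  constructor
  · intro hzJ
    rw [← hKJ] at hzJ
    rcases (by simpa using hzJ : z ∈ I ∨ z ≤ x) with hz | hz
    · exact Or.inl hz
    · rcases eq_or_lt_of_le hz with heq | hlt
      · exact Or.inr heq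
      · by_cases hzI : z ∈ I
        · exact Or.inl hzI
        · have hzJ' : z ∈ J := hKle hzJ
          exact absurd hlt (not_lt_of_ge (hxmin (by simp only [hS, Finset.mem_filter, Finset.mem_univ, true_and]; exact ⟨hzJ', hzI⟩) hlt.le))
  · rintro (hz | rfl)
    · exact h.1.le hz
    · exact hxJ


variable {n : ℕ} {e : γ → Fin n} {lab : LowerSet γ → LowerSet γ → Fin n}

def chainTail (I : LowerSet γ) : List γ → List (LowerSet γ)
  | [] => []
  | x :: u => (I ⊔ LowerSet.Iic x) :: chainTail (I ⊔ LowerSet.Iic x) u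

def chainOf (I : LowerSet γ) (w : List γ) : List (LowerSet γ) := I :: chainTail I w

def endSet (I : LowerSet γ) (w : List γ) : LowerSet γ :=
  w.foldl (fun J x => J ⊔ LowerSet.Iic x) I

def StepOK (I : LowerSet γ) : List γ → Prop
  | [] => True
  | x :: u => (x ∉ I ∧ ∀ z, z ≤ x → z ≠ x → z ∈ I) ∧ StepOK (I ⊔ LowerSet.Iic x) u

@[simp] lemma chainOf_nil (I : LowerSet γ) : chainOf I [] = [I] := rfl

@[simp] lemma chainOf_cons (I : LowerSet γ) (x : γ) (u : List γ) :
    chainOf I (x :: u) = I :: chainOf (I ⊔ LowerSet.Iic x) u := rfl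

@[simp] lemma endSet_nil (I : LowerSet γ) : endSet I [] = I := rfl

@[simp] lemma endSet_cons (I : LowerSet γ) (x : γ) (u : List γ) :
    endSet I (x :: u) = endSet (I ⊔ LowerSet.Iic x) u := rfl

lemma endSet_append (I : LowerSet γ) (u v : List γ) :
    endSet I (u ++ v) = endSet (endSet I u) v := List.foldl_append ..

lemma stepOK_cons {I : LowerSet γ} {x : γ} {u : List γ} :
    StepOK I (x :: u) ↔ (x ∉ I ∧ ∀ z, z ≤ x → z ≠ x → z ∈ I) ∧ StepOK (I ⊔ LowerSet.Iic x) u :=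
  Iff.rfl

lemma mem_step {I : LowerSet γ} {x : γ} (hx : x ∉ I) (hb : ∀ z, z ≤ x → z ≠ x → z ∈ I) :
    ∀ z, z ∈ I ⊔ LowerSet.Iic x ↔ z ∈ I ∨ z = x := by
  intro z
  constructor
  · intro hz
    rcases (by simpa using hz : z ∈ I ∨ z ≤ x) with h | h
    · exact Or.inl h
    · by_cases hzx : z = x
      · exact Or.inr hzx
      · exact Or.inl (hb z h hzx)
  · rintro (h | rfl)
    · exact (LowerSet.coe_subset_coe.mpr le_sup_left) h
    · simp

lemma cover_step {I : LowerSet γ} {x : γ} (hx : x ∉ I) (hb : ∀ z, z ≤ x → z ≠ x → z ∈ I) :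
    I ⋖ I ⊔ LowerSet.Iic x :=
  cover_of_insert hx (mem_step hx hb)

lemma length_chainOf (I : LowerSet γ) (w : List γ) :
    (chainOf I w).length = w.length + 1 := by
  induction w generalizing I with
  | nil => rfl
  | cons x u ih => simp [ih]

lemma getLast?_chainOf (I : LowerSet γ) (w : List γ) :
    (chainOf I w).getLast? = some (endSet I w) := by
  induction w generalizing I with
  | nil => rfl
  | cons x u ih =>
    rw [chainOf_cons, endSet_cons, ← ih (I ⊔ LowerSet.Iic x)]
    rw [chainOf]
    exact getLast?_cons_cons

lemma chain'_chainOf {I : LowerSet γ} {w : List γ} (h : StepOK I w) :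
    (chainOf I w).Chain' (· ⋖ ·) := by
  induction w generalizing I with
  | nil => exact isChain_singleton _
  | cons x u ih =>
    obtain ⟨⟨hx, hb⟩, htail⟩ := h
    rw [chainOf_cons, chainOf]
    exact isChain_cons_cons.mpr ⟨cover_step hx hb, ih htail⟩

lemma satChain_chainOf {I : LowerSet γ} {w : List γ} (h : StepOK I w) :
    IsSatChain (chainOf I w) I (endSet I w) :=
  ⟨chain'_chainOf h, rfl, getLast?_chainOf I w⟩

lemma labelSeq_chainOf (hlab : ∀ I J : LowerSet γ, I ⋖ J → ∀ x : γ, x ∈ J → x ∉ I → lab I J = e x)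
    {I : LowerSet γ} {w : List γ} (h : StepOK I w) :
    labelSeq lab (chainOf I w) = w.map e := by
  induction w generalizing I with
  | nil => rfl
  | cons x u ih =>
    obtain ⟨⟨hx, hb⟩, htail⟩ := h
    rw [chainOf_cons, chainOf, labelSeq_cons₂, ← chainOf, ih htail, map_cons]
    congr 1
    exact hlab I _ (cover_step hx hb) x (by simp) hx

lemma mem_endSet {I : LowerSet γ} {w : List γ} (h : StepOK I w) :
    ∀ z, z ∈ endSet I w ↔ z ∈ I ∨ z ∈ w := by
  induction w generalizing I with
  | nil => simp
  | cons x u ih =>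
    obtain ⟨⟨hx, hb⟩, htail⟩ := h
    intro z
    rw [endSet_cons, ih htail z, mem_step hx hb z, mem_cons]
    tauto

lemma stepOK_nodup {I : LowerSet γ} {w : List γ} (h : StepOK I w) :
    w.Nodup ∧ ∀ x ∈ w, x ∉ I := by
  induction w generalizing I with
  | nil => simp
  | cons x u ih =>
    obtain ⟨⟨hx, hb⟩, htail⟩ := h
    obtain ⟨hnd, hni⟩ := ih htail
    have hxu : x ∉ u := fun hmem => (hni x hmem) (by simp)
    refine ⟨nodup_cons.mpr ⟨hxu, hnd⟩, ?_⟩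
    intro y hy
    rcases mem_cons.mp hy with rfl | hy
    · exact hx
    · exact fun hyI => (hni y hy) ((LowerSet.coe_subset_coe.mpr le_sup_left) hyI)

lemma stepOK_index [DecidableEq γ] {I : LowerSet γ} {w : List γ} (h : StepOK I w) :
    ∀ a b, b ∈ w → a ≤ b → a ∉ I → a ∈ w ∧ w.idxOf a ≤ w.idxOf b := by
  induction w generalizing I with
  | nil => simp
  | cons x u ih =>
    obtain ⟨⟨hx, hb⟩, htail⟩ := h
    intro a b hbw hab haI
    have hxu : x ∉ u := fun hmem => ((stepOK_nodup htail).2 x hmem) (by simp)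
    rcases mem_cons.mp hbw with heq | hbu
    · subst heq
      have : a = b := by
        by_contra hax
        exact haI (hb a hab hax)
      subst this
      exact ⟨by simp, le_refl _⟩
    · by_cases haI' : a ∈ I ⊔ LowerSet.Iic x
      · have hax : a = x := by
          rcases (mem_step hx hb a).mp haI' with h' | h'
          · exact absurd h' haI
          · exact h'
        subst hax
        simp
      · obtain ⟨hau, hidx⟩ := ih htail a b hbu hab haI'
        have hax : a ≠ x := fun h' => haI' (h' ▸ (by simp : x ∈ I ⊔ LowerSet.Iic x))
        have hbx : b ≠ x := fun h' => hxu (h' ▸ hbu)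
        refine ⟨mem_cons_of_mem _ hau, ?_⟩
        rw [idxOf_cons_ne _ (Ne.symm hax), idxOf_cons_ne _ (Ne.symm hbx)]
        omega

lemma stepOK_of_good [DecidableEq γ] {I : LowerSet γ} {w : List γ} (hnd : w.Nodup)
    (hni : ∀ x ∈ w, x ∉ I)
    (hdown : ∀ a b, b ∈ w → a ≤ b → a ∈ I ∨ (a ∈ w ∧ w.idxOf a ≤ w.idxOf b)) :
    StepOK I w := by
  induction w generalizing I with
  | nil => trivial
  | cons x u ih =>
    have hxu : x ∉ u := (nodup_cons.mp hnd).1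
    refine ⟨⟨hni x (by simp), ?_⟩, ?_⟩
    · intro z hz hzx
      rcases hdown z x (by simp) hz with h' | ⟨hzw, hidx⟩
      · exact h'
      · rw [idxOf_cons_self, idxOf_cons_ne _ (Ne.symm hzx)] at hidx
        omega
    · refine ih (nodup_cons.mp hnd).2 ?_ ?_
      · intro y hy
        intro hyI'
        rcases (by simpa using hyI' : y ∈ I ∨ y ≤ x) with h' | h'
        · exact hni y (mem_cons_of_mem _ hy) h'
        · rcases hdown y x (by simp) h' with h'' | ⟨_, hidx⟩
          · exact hni y (mem_cons_of_mem _ hy) h''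
          · rw [idxOf_cons_self, idxOf_cons_ne _ (fun hc => hxu (by rw [hc]; exact hy))] at hidx
            omega
      · intro a b hbu hab
        have hbx : b ≠ x := fun h' => hxu (h' ▸ hbu)
        rcases hdown a b (mem_cons_of_mem _ hbu) hab with h' | ⟨haw, hidx⟩
        · exact Or.inl ((LowerSet.coe_subset_coe.mpr le_sup_left) h')
        · rcases mem_cons.mp haw with heq | hau
          · exact Or.inl (by rw [heq]; simp)
          · have hax : a ≠ x := fun h' => hxu (h' ▸ hau)
            rw [idxOf_cons_ne _ (Ne.symm hax), idxOf_cons_ne _ (Ne.symm hbx)] at hidx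
            exact Or.inr ⟨hau, by omega⟩


lemma stepOK_append {I : LowerSet γ} {u v : List γ} (h : StepOK I (u ++ v)) :
    StepOK I u ∧ StepOK (endSet I u) v := by
  induction u generalizing I with
  | nil => exact ⟨trivial, h⟩
  | cons x u ih =>
    obtain ⟨hhead, htail⟩ := h
    obtain ⟨h1, h2⟩ := ih htail
    exact ⟨⟨hhead, h1⟩, h2⟩

lemma chainOf_ne_nil (I : LowerSet γ) (w : List γ) : chainOf I w ≠ [] := by
  simp [chainOf]

lemma chainOf_append (I : LowerSet γ) (u v : List γ) :
    chainOf I (u ++ v) = (chainOf I u).dropLast ++ chainOf (endSet I u) v := by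
  induction u generalizing I with
  | nil => simp
  | cons x u ih =>
    rw [cons_append, chainOf_cons, ih, chainOf_cons, endSet_cons]
    rw [show chainOf (I ⊔ LowerSet.Iic x) u = (I ⊔ LowerSet.Iic x) :: chainTail _ u from rfl]
    rw [dropLast_cons₂, cons_append]

lemma word_of_satChain : ∀ {c : List (LowerSet γ)} {I J : LowerSet γ}, IsSatChain c I J →
    ∃ w, StepOK I w ∧ c = chainOf I w ∧ endSet I w = J := by
  intro c
  induction c with
  | nil => intro I J h; simp [IsSatChain] at h
  | cons I₀ t ih =>
    intro I J h
    obtain ⟨hch, hhd, hlast⟩ := h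
    have hI : I₀ = I := by simpa using hhd
    subst hI
    match t, hch, hlast with
    | [], _, hlast =>
      refine ⟨[], trivial, rfl, ?_⟩
      simpa using hlast
    | K :: rest, hch, hlast =>
      have hcov : I₀ ⋖ K := (isChain_cons_cons.mp hch).1
      have hsat : IsSatChain (K :: rest) K J :=
        ⟨(isChain_cons_cons.mp hch).2, rfl, by rw [← hlast]; exact getLast?_cons_cons.symm⟩
      obtain ⟨w', hw1, hw2, hw3⟩ := ih hsat
      obtain ⟨x, hxI, hxmem⟩ := exists_insert_of_cover hcov
      have hbelow : ∀ z, z ≤ x → z ≠ x → z ∈ I₀ := by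
        intro z hz hzx
        have hzK : z ∈ K := K.lower hz ((hxmem x).mpr (Or.inr rfl))
        exact ((hxmem z).mp hzK).resolve_right hzx
      have hK : I₀ ⊔ LowerSet.Iic x = K := by
        apply SetLike.ext
        intro z
        rw [mem_step hxI hbelow z]
        constructor
        · rintro (h | heq)
          · exact hcov.1.le h
          · exact (hxmem z).mpr (Or.inr heq)
        · exact fun h => (hxmem z).mp h
      refine ⟨x :: w', ⟨⟨hxI, hbelow⟩, by rw [hK]; exact hw1⟩, ?_, ?_⟩
      · rw [chainOf_cons, hK, ← hw2]
      · rw [endSet_cons, hK, hw3]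


variable {f : Fin n → γ}

lemma maxChain_pkg (hlab : ∀ I J : LowerSet γ, I ⋖ J → ∀ x : γ, x ∈ J → x ∉ I → lab I J = e x)
    (m : MaxChain (LowerSet γ)) :
    ∃ w : List γ, StepOK ⊥ w ∧ m.elems = chainOf ⊥ w ∧ endSet ⊥ w = ⊤ ∧
      labelSeq lab m.elems = w.map e ∧ (∀ z : γ, z ∈ w) ∧ w.Nodup := by
  obtain ⟨w, h1, h2, h3⟩ := word_of_satChain ⟨m.chain', m.head_bot, m.last_top⟩
  refine ⟨w, h1, h2, h3, by rw [h2]; exact labelSeq_chainOf hlab h1, ?_, (stepOK_nodup h1).1⟩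
  intro z
  have hz : z ∈ endSet ⊥ w := by rw [h3]; simp
  rcases (mem_endSet h1 z).mp hz with h | h
  · simp at h
  · exact h

lemma labels_mem (hlab : ∀ I J : LowerSet γ, I ⋖ J → ∀ x : γ, x ∈ J → x ∉ I → lab I J = e x)
    (hef : ∀ a : Fin n, e (f a) = a) (m : MaxChain (LowerSet γ)) :
    ∀ a : Fin n, a ∈ labelSeq lab m.elems := by
  obtain ⟨w, h1, h2, h3, h4, h5, h6⟩ := maxChain_pkg hlab m
  intro a
  rw [h4]
  exact mem_map.mpr ⟨f a, h5 (f a), hef a⟩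

lemma labels_nodup (hlab : ∀ I J : LowerSet γ, I ⋖ J → ∀ x : γ, x ∈ J → x ∉ I → lab I J = e x)
    (hfe : ∀ x : γ, f (e x) = x) (m : MaxChain (LowerSet γ)) :
    (labelSeq lab m.elems).Nodup := by
  obtain ⟨w, h1, h2, h3, h4, h5, h6⟩ := maxChain_pkg hlab m
  rw [h4]
  exact h6.map (fun a b h => by rw [← hfe a, ← hfe b, h])

lemma chain_eq_of_labels (hlab : ∀ I J : LowerSet γ, I ⋖ J → ∀ x : γ, x ∈ J → x ∉ I → lab I J = e x)
    (hfe : ∀ x : γ, f (e x) = x) {m m' : MaxChain (LowerSet γ)}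
    (h : labelSeq lab m.elems = labelSeq lab m'.elems) : m = m' := by
  obtain ⟨w, h1, h2, h3, h4, h5, h6⟩ := maxChain_pkg hlab m
  obtain ⟨w', h1', h2', h3', h4', h5', h6'⟩ := maxChain_pkg hlab m'
  have hw : w = w' := by
    have heq : w.map e = w'.map e := by rw [← h4, ← h4', h]
    have e1 : (w.map e).map f = w := by
      rw [map_map]; exact (map_congr_left (fun z _ => hfe z)).trans (map_id w)
    have e2 : (w'.map e).map f = w' := by
      rw [map_map]; exact (map_congr_left (fun z _ => hfe z)).trans (map_id w')
    rw [← e1, ← e2, heq]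
  exact maxChain_ext (by rw [h2, h2', hw])

lemma ext_prop (hlab : ∀ I J : LowerSet γ, I ⋖ J → ∀ x : γ, x ∈ J → x ∉ I → lab I J = e x)
    (hfe : ∀ x : γ, f (e x) = x) (hef : ∀ a : Fin n, e (f a) = a)
    (m : MaxChain (LowerSet γ)) :
    ∀ a b : Fin n, f a ≤ f b → a ≠ b →
      (labelSeq lab m.elems).idxOf a < (labelSeq lab m.elems).idxOf b := by
  letI : DecidableEq γ := Classical.decEq γ
  have einj : Function.Injective e := fun a b h => by rw [← hfe a, ← hfe b, h]
  obtain ⟨w, h1, h2, h3, h4, h5, h6⟩ := maxChain_pkg hlab m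
  intro a b hab hne
  have hfaI : f a ∉ (⊥ : LowerSet γ) := by simp
  obtain ⟨-, hidx⟩ := stepOK_index h1 (f a) (f b) (h5 (f b)) hab hfaI
  have e1 : (labelSeq lab m.elems).idxOf a = w.idxOf (f a) := by
    conv_lhs => rw [h4, ← hef a]
    exact indexOf_map einj w (f a)
  have e2 : (labelSeq lab m.elems).idxOf b = w.idxOf (f b) := by
    conv_lhs => rw [h4, ← hef b]
    exact indexOf_map einj w (f b)
  have hne' : (labelSeq lab m.elems).idxOf a ≠ (labelSeq lab m.elems).idxOf b :=
    fun h => hne ((idxOf_inj (labels_mem hlab hef m a)).mp h)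
  omega

lemma realize (hlab : ∀ I J : LowerSet γ, I ⋖ J → ∀ x : γ, x ∈ J → x ∉ I → lab I J = e x)
    (hfe : ∀ x : γ, f (e x) = x) (hef : ∀ a : Fin n, e (f a) = a)
    (hmono : ∀ x y : γ, x ≤ y → e x ≤ e y)
    (l : List (Fin n)) (hml : ∀ a : Fin n, a ∈ l) (hnd : l.Nodup)
    (hext : ∀ a b : Fin n, f a ≤ f b → a ≠ b → l.idxOf a < l.idxOf b) :
    ∃ m : MaxChain (LowerSet γ), labelSeq lab m.elems = l := by
  letI : DecidableEq γ := Classical.decEq γ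
  have finj : Function.Injective f := fun a b h => by rw [← hef a, ← hef b, h]
  set w : List γ := l.map f with hwdef
  have hndw : w.Nodup := hnd.map finj
  have hmw : ∀ z : γ, z ∈ w := fun z => mem_map.mpr ⟨e z, hml (e z), hfe z⟩
  have hni : ∀ x ∈ w, x ∉ (⊥ : LowerSet γ) := fun x _ => by simp
  have idxw : ∀ z : γ, w.idxOf z = l.idxOf (e z) := by
    intro z
    conv_lhs => rw [← hfe z]
    exact indexOf_map finj l (e z)
  have hdown : ∀ a b : γ, b ∈ w → a ≤ b →
      a ∈ (⊥ : LowerSet γ) ∨ (a ∈ w ∧ w.idxOf a ≤ w.idxOf b) := by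
    intro a b hbw hab
    refine Or.inr ⟨hmw a, ?_⟩
    rw [idxw a, idxw b]
    rcases eq_or_ne (e a) (e b) with heq | hne
    · rw [heq]
    · have := hext (e a) (e b) (by rw [hfe, hfe]; exact hab) hne
      omega
  have hstep : StepOK ⊥ w := stepOK_of_good hndw hni hdown
  have hend : endSet ⊥ w = ⊤ :=
    SetLike.ext fun z => ⟨fun _ => by simp, fun _ => (mem_endSet hstep z).mpr (Or.inr (hmw z))⟩
  obtain ⟨hch, hhd, hlast⟩ := satChain_chainOf hstep
  refine ⟨⟨chainOf ⊥ w, hch, hhd, by rw [hlast, hend]⟩, ?_⟩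
  rw [labelSeq_chainOf hlab hstep, hwdef, map_map]
  exact (map_congr_left (fun z _ => hef z)).trans (map_id l)


lemma isEL (hlab : ∀ I J : LowerSet γ, I ⋖ J → ∀ x : γ, x ∈ J → x ∉ I → lab I J = e x)
    (hfe : ∀ x : γ, f (e x) = x) (hmono : ∀ x y : γ, x ≤ y → e x ≤ e y) :
    IsELLabeling lab := by
  classical
  have einj : Function.Injective e := fun a b h => by rw [← hfe a, ← hfe b, h]
  intro x y hxy
  set r : γ → γ → Prop := fun a b => e a ≤ e b with hrdef
  haveI : IsTrans γ r := ⟨fun a b c h1 h2 => le_trans h1 h2⟩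
  haveI : IsAntisymm γ r := ⟨fun a b h1 h2 => einj (le_antisymm h1 h2)⟩
  haveI : IsTotal γ r := ⟨fun a b => le_total (e a) (e b)⟩
  set S : Finset γ := Finset.univ.filter (fun z => z ∈ y ∧ z ∉ x) with hS
  set s : List γ := S.sort r with hs
  have hsnd : s.Nodup := Finset.sort_nodup (s := S) (r := r)
  have hsmem : ∀ z, z ∈ s ↔ (z ∈ y ∧ z ∉ x) := by
    intro z
    rw [hs, Finset.mem_sort, hS]
    simp
  have hsort : s.Pairwise r := Finset.pairwise_sort (s := S) (r := r)
  have hidxmono : ∀ a b, a ∈ s → b ∈ s → a ≤ b → s.idxOf a ≤ s.idxOf b := by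
    intro a b ha hb hab
    rcases eq_or_ne a b with rfl | hne
    · exact le_refl _
    · by_contra hcon
      have hba : s.idxOf b < s.idxOf a := by omega
      have hia : s.idxOf a < s.length := idxOf_lt_length_iff.mpr ha
      have hr : r b a := by
        have := (pairwise_iff_getElem.mp hsort) _ _
          (idxOf_lt_length_iff.mpr hb) hia hba
        rwa [getElem_idxOf, getElem_idxOf] at this
      exact hne (antisymm (a := a) (hmono a b hab) hr)
  have hstep : StepOK x s := by
    refine stepOK_of_good hsnd (fun z hz => ((hsmem z).mp hz).2) ?_
    intro a b hbs hab
    by_cases hax : a ∈ x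
    · exact Or.inl hax
    · have hay : a ∈ y := y.lower hab ((hsmem b).mp hbs).1
      have has : a ∈ s := (hsmem a).mpr ⟨hay, hax⟩
      exact Or.inr ⟨has, hidxmono a b has hbs hab⟩
  have hendy : endSet x s = y := by
    apply SetLike.ext
    intro z
    rw [mem_endSet hstep z]
    constructor
    · rintro (h | h)
      · exact hxy.le h
      · exact ((hsmem z).mp h).1
    · intro hzy
      by_cases hzx : z ∈ x
      · exact Or.inl hzx
      · exact Or.inr ((hsmem z).mpr ⟨hzy, hzx⟩)
  have hsat₀ : IsSatChain (chainOf x s) x y := by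
    have := satChain_chainOf hstep
    rwa [hendy] at this
  have hlabels₀ : labelSeq lab (chainOf x s) = s.map e := labelSeq_chainOf hlab hstep
  have hpair₀ : (s.map e).Pairwise (· ≤ ·) := pairwise_map.mpr hsort
  have hasc₀ : AscLabels lab (chainOf x s) := by
    rw [AscLabels, hlabels₀]
    exact hpair₀.isChain
  have hnd₀ : (s.map e).Nodup := hsnd.map einj
  -- every saturated chain's word
  have key : ∀ c : List (LowerSet γ), IsSatChain c x y →
      ∃ w, StepOK x w ∧ c = chainOf x w ∧ labelSeq lab c = w.map e ∧
        (∀ z, z ∈ w ↔ z ∈ s) ∧ w.Nodup := by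
    intro c hc
    obtain ⟨w, h1, h2, h3⟩ := word_of_satChain hc
    refine ⟨w, h1, h2, by rw [h2]; exact labelSeq_chainOf hlab h1, ?_, (stepOK_nodup h1).1⟩
    intro z
    rw [hsmem z]
    constructor
    · intro hz
      refine ⟨by rw [← h3]; exact (mem_endSet h1 z).mpr (Or.inr hz), (stepOK_nodup h1).2 z hz⟩
    · rintro ⟨hzy, hzx⟩
      have : z ∈ endSet x w := by rw [h3]; exact hzy
      exact ((mem_endSet h1 z).mp this).resolve_left hzx
  have huniq : ∀ c : List (LowerSet γ), IsSatChain c x y → AscLabels lab c →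
      c = chainOf x s := by
    intro c hc hasc
    obtain ⟨w, h1, h2, h3, h4, h5⟩ := key c hc
    have hndw : (w.map e).Nodup := h5.map einj
    have hchain : (w.map e).Chain' (· ≤ ·) := by rw [← h3]; exact hasc
    have hpw : (w.map e).Pairwise (· ≤ ·) := isChain_iff_pairwise.mp hchain
    have hperm : w ~ s := perm_of_nodup_nodup_toFinset_eq h5 hsnd
      (Finset.ext fun z => by simp [h4 z])
    have : w.map e = s.map e :=
      Perm.eq_of_pairwise' hpw hpair₀ (hperm.map e)
    have hws : w = s := map_injective_iff.mpr einj this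
    rw [h2, hws]
  constructor
  · refine ⟨chainOf x s, ⟨hsat₀, hasc₀⟩, fun c hc => huniq c hc.1 hc.2⟩
  · intro c c' hc hc' hasc hne
    have hceq : c = chainOf x s := huniq c hc hasc
    obtain ⟨w', h1', h2', h3', h4', h5'⟩ := key c' hc'
    have hperm : w' ~ s := perm_of_nodup_nodup_toFinset_eq h5' hsnd
      (Finset.ext fun z => by simp [h4' z])
    have hlabne : labelSeq lab c ≠ labelSeq lab c' := by
      intro hEq
      apply hne
      rw [hceq, h2']
      congr 1
      have : s.map e = w'.map e := by rw [← h3', ← hEq, hceq, hlabels₀]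
      exact map_injective_iff.mpr einj this
    rw [hceq, hlabels₀] at hlabne ⊢
    rw [h3'] at hlabne ⊢
    exact sorted_lex_min hpair₀ hnd₀ ((hperm.map e).symm) hlabne


lemma move_decomp (hlab : ∀ I J : LowerSet γ, I ⋖ J → ∀ x : γ, x ∈ J → x ∉ I → lab I J = e x)
    {m m' : MaxChain (LowerSet γ)} (hmv : ELPolygonMove lab m m') :
    ∃ (A B : List (Fin n)) (p q : Fin n), p < q ∧
      labelSeq lab m.elems = A ++ p :: q :: B ∧
      labelSeq lab m'.elems = A ++ q :: p :: B := by
  classical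
  obtain ⟨a, c, b, x, w', y, hm, hm', hcne, hwc, hasc, hdesc⟩ := hmv
  -- lengths
  obtain ⟨wm, hw1, hw2, hw3, hw4, hw5, hw6⟩ := maxChain_pkg hlab m
  obtain ⟨wm', hw1', hw2', hw3', hw4', hw5', hw6'⟩ := maxChain_pkg hlab m'
  have hlen : m.elems.length = m'.elems.length := by
    have hperm : wm ~ wm' := perm_of_nodup_nodup_toFinset_eq hw6 hw6'
      (Finset.ext fun z => by simp [hw5 z, hw5' z])
    rw [hw2, hw2', length_chainOf, length_chainOf, hperm.length_eq]
  have hclen : c.length = 1 := by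
    rw [hm, hm'] at hlen
    simp at hlen
    omega
  obtain ⟨v, rfl⟩ := length_eq_one_iff.mp hclen
  -- covers in m
  have hch := m.chain'
  rw [hm] at hch
  have hch2 : Chain' (· ⋖ ·) (x :: v :: y :: b) := ((isChain_append.mp (by simpa using hch : Chain' (· ⋖ ·) (a ++ x :: v :: y :: b))).2).1
  have hch' := m'.chain'
  rw [hm'] at hch'
  have hch2' : Chain' (· ⋖ ·) (x :: w' :: y :: b) := ((isChain_append.mp (by simpa using hch' : Chain' (· ⋖ ·) (a ++ x :: w' :: y :: b))).2).1
  have hxv : x ⋖ v := (isChain_cons_cons.mp hch2).1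
  have hvy : v ⋖ y := (isChain_cons_cons.mp (isChain_cons_cons.mp hch2).2).1
  have hxw : x ⋖ w' := (isChain_cons_cons.mp hch2').1
  have hw'y : w' ⋖ y := (isChain_cons_cons.mp (isChain_cons_cons.mp hch2').2).1
  obtain ⟨α, hαx, hαmem⟩ := exists_insert_of_cover hxv
  obtain ⟨β, hβv, hβmem⟩ := exists_insert_of_cover hvy
  obtain ⟨δ, hδx, hδmem⟩ := exists_insert_of_cover hxw
  obtain ⟨σ, hσw, hσmem⟩ := exists_insert_of_cover hw'y
  have hvw : v ≠ w' := fun h => (by simpa using hwc : w' ≠ v) h.symm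
  have hδy : δ ∈ y := hw'y.1.le ((hδmem δ).mpr (Or.inr rfl))
  have hδβ : δ = β := by
    rcases (hβmem δ).mp hδy with hδv | h
    · rcases (hαmem δ).mp hδv with h1 | h1
      · exact absurd h1 hδx
      · exfalso
        apply hvw
        apply SetLike.ext
        intro z
        rw [hαmem z, hδmem z, h1]
    · exact h
  have hσy : σ ∈ y := (hσmem σ).mpr (Or.inr rfl)
  have hσα : σ = α := by
    rcases (hβmem σ).mp hσy with hσv | h
    · rcases (hαmem σ).mp hσv with h1 | h1
      · exact absurd (hxw.1.le h1) hσw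
      · exact h1
    · exfalso
      apply hσw
      rw [h, ← hδβ]
      exact (hδmem δ).mpr (Or.inr rfl)
  have lxv : lab x v = e α := hlab x v hxv α ((hαmem α).mpr (Or.inr rfl)) hαx
  have lvy : lab v y = e β := hlab v y hvy β ((hβmem β).mpr (Or.inr rfl)) hβv
  have lxw : lab x w' = e β := by
    rw [← hδβ]
    exact hlab x w' hxw δ ((hδmem δ).mpr (Or.inr rfl)) hδx
  have lwy : lab w' y = e α := by
    rw [← hσα]
    exact hlab w' y hw'y σ hσy hσw
  have hpr : e α < e β := by
    rw [lxw, lwy] at hdesc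
    exact not_le.mp hdesc
  have eA : labelSeq lab m.elems
      = labelSeq lab (a ++ [x]) ++ lab x v :: lab v y :: labelSeq lab (y :: b) := by
    rw [hm, show x :: ([v] ++ y :: b) = x :: v :: y :: b from rfl,
      labelSeq_append lab a x (v :: y :: b)]
    rfl
  have eA' : labelSeq lab m'.elems
      = labelSeq lab (a ++ [x]) ++ lab x w' :: lab w' y :: labelSeq lab (y :: b) := by
    rw [hm', labelSeq_append lab a x (w' :: y :: b)]
    rfl
  exact ⟨labelSeq lab (a ++ [x]), labelSeq lab (y :: b), e α, e β, hpr,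
    by rw [eA, lxv, lvy], by rw [eA', lxw, lwy]⟩


lemma swap_move (hlab : ∀ I J : LowerSet γ, I ⋖ J → ∀ x : γ, x ∈ J → x ∉ I → lab I J = e x)
    (hfe : ∀ x : γ, f (e x) = x) (hef : ∀ a : Fin n, e (f a) = a)
    {m m₁ : MaxChain (LowerSet γ)} {A B : List (Fin n)} {p q : Fin n}
    (hpr : p < q) (h1 : labelSeq lab m.elems = A ++ p :: q :: B)
    (h2 : labelSeq lab m₁.elems = A ++ q :: p :: B) :
    ELPolygonMove lab m m₁ := by
  obtain ⟨w, hs, helems, hend, hlabels, hmem, hnd⟩ := maxChain_pkg hlab m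
  obtain ⟨w₁, hs₁, helems₁, hend₁, hlabels₁, hmem₁, hnd₁⟩ := maxChain_pkg hlab m₁
  have hwid : (w.map e).map f = w := by
    rw [map_map]; exact (map_congr_left (fun z _ => hfe z)).trans (map_id w)
  have hwid₁ : (w₁.map e).map f = w₁ := by
    rw [map_map]; exact (map_congr_left (fun z _ => hfe z)).trans (map_id w₁)
  have hw : w = (A.map f) ++ f p :: f q :: (B.map f) := by
    conv_lhs => rw [← hwid, ← hlabels, h1]
    simp
  have hw₁ : w₁ = (A.map f) ++ f q :: f p :: (B.map f) := by
    conv_lhs => rw [← hwid₁, ← hlabels₁, h2]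
    simp
  rw [hw] at hs
  rw [hw₁] at hs₁
  have hsplit := (stepOK_append hs).2
  have hsplit₁ := (stepOK_append hs₁).2
  rw [stepOK_cons] at hsplit hsplit₁
  obtain ⟨⟨hpX, hbp⟩, hrest⟩ := hsplit
  rw [stepOK_cons] at hrest
  obtain ⟨⟨hqV, hbq⟩, -⟩ := hrest
  obtain ⟨⟨hqX, hbqX⟩, hrest₁⟩ := hsplit₁
  rw [stepOK_cons] at hrest₁
  obtain ⟨⟨hpW, hbpW⟩, -⟩ := hrest₁
  set X := endSet ⊥ (A.map f) with hXdef
  have hYY : (X ⊔ LowerSet.Iic (f q)) ⊔ LowerSet.Iic (f p)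
      = (X ⊔ LowerSet.Iic (f p)) ⊔ LowerSet.Iic (f q) := sup_right_comm X _ _
  have hm : m.elems = (chainOf ⊥ (A.map f)).dropLast
      ++ X :: (X ⊔ LowerSet.Iic (f p)) :: ((X ⊔ LowerSet.Iic (f p)) ⊔ LowerSet.Iic (f q))
        :: chainTail ((X ⊔ LowerSet.Iic (f p)) ⊔ LowerSet.Iic (f q)) (B.map f) := by
    rw [helems, hw, chainOf_append]
    rfl
  have hm₁ : m₁.elems = (chainOf ⊥ (A.map f)).dropLast
      ++ X :: (X ⊔ LowerSet.Iic (f q)) :: ((X ⊔ LowerSet.Iic (f p)) ⊔ LowerSet.Iic (f q))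
        :: chainTail ((X ⊔ LowerSet.Iic (f p)) ⊔ LowerSet.Iic (f q)) (B.map f) := by
    rw [helems₁, hw₁, chainOf_append, ← hYY]
    rfl
  have lXV : lab X (X ⊔ LowerSet.Iic (f p)) = p := by
    rw [hlab X _ (cover_step hpX hbp) (f p) (by simp) hpX]
    exact hef p
  have lVY : lab (X ⊔ LowerSet.Iic (f p)) ((X ⊔ LowerSet.Iic (f p)) ⊔ LowerSet.Iic (f q)) = q := by
    rw [hlab _ _ (cover_step hqV hbq) (f q) (by simp) hqV]
    exact hef q
  have lXW : lab X (X ⊔ LowerSet.Iic (f q)) = q := by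
    rw [hlab X _ (cover_step hqX hbqX) (f q) (by simp) hqX]
    exact hef q
  have hcovWY : (X ⊔ LowerSet.Iic (f q)) ⋖ ((X ⊔ LowerSet.Iic (f p)) ⊔ LowerSet.Iic (f q)) := by
    rw [← hYY]
    exact cover_step hpW hbpW
  have lWY : lab (X ⊔ LowerSet.Iic (f q)) ((X ⊔ LowerSet.Iic (f p)) ⊔ LowerSet.Iic (f q)) = p := by
    rw [hlab _ _ hcovWY (f p) (by rw [← hYY]; simp) hpW]
    exact hef p
  have hWV : (X ⊔ LowerSet.Iic (f q)) ≠ (X ⊔ LowerSet.Iic (f p)) :=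
    fun h => hpW (by rw [h]; simp)
  refine ⟨(chainOf ⊥ (A.map f)).dropLast, [X ⊔ LowerSet.Iic (f p)],
    chainTail ((X ⊔ LowerSet.Iic (f p)) ⊔ LowerSet.Iic (f q)) (B.map f),
    X, X ⊔ LowerSet.Iic (f q), (X ⊔ LowerSet.Iic (f p)) ⊔ LowerSet.Iic (f q),
    by rw [hm]; rfl, by rw [hm₁], by simp, by simpa using hWV, ?_, ?_⟩
  · show Chain' (· ≤ ·) (labelSeq lab _)
    have : labelSeq lab
        (X :: ([X ⊔ LowerSet.Iic (f p)] ++ [(X ⊔ LowerSet.Iic (f p)) ⊔ LowerSet.Iic (f q)]))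
        = [lab X (X ⊔ LowerSet.Iic (f p)),
           lab (X ⊔ LowerSet.Iic (f p)) ((X ⊔ LowerSet.Iic (f p)) ⊔ LowerSet.Iic (f q))] := rfl
    rw [this, lXV, lVY]
    exact isChain_pair.mpr hpr.le
  · rw [lXW, lWY]
    exact not_le.mpr hpr

end Poset

end S19

/-- let `γ` be a finite poset with `n` elements, `e` a linear
extension of `γ` (an order-preserving bijection onto `{1,…,n}`, here `Fin n`),
and label each cover `I ⋖ I ∪ {x}` of the distributive lattice `J(γ)` of lower
sets of `γ` by `e x`.  Then this labeling is an EL-labeling of `J(γ)`; the set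
`Lin(γ,e)` of label sequences of maximal chains consists of permutations and is
a lower set of the weak order on `Sₙ` (ordered by containment of inversion
sets); and the map `m ↦ λ_e(m)` is an order isomorphism from the maximal chain
descent order `C(J(γ),λ_e)` onto `Lin(γ,e)` with the induced weak order: it is
injective and both it and its inverse preserve order. -/
theorem statement19 {γ : Type*} [PartialOrder γ] [Fintype γ] (n : ℕ)
    (hcard : Fintype.card γ = n) (e : γ → Fin n)
    (hbij : Function.Bijective e) (hmono : ∀ x y : γ, x ≤ y → e x ≤ e y)
    (lab : LowerSet γ → LowerSet γ → Fin n)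
    (hlab : ∀ I J : LowerSet γ, I ⋖ J → ∀ x : γ, x ∈ J → x ∉ I → lab I J = e x) :
    IsELLabeling lab ∧
      (∀ m : MaxChain (LowerSet γ),
        List.Perm (labelSeq lab m.elems) (List.finRange n)) ∧
      (∀ (m : MaxChain (LowerSet γ)) (l : List (Fin n)),
        List.Perm l (List.finRange n) →
        InvW l ⊆ InvW (labelSeq lab m.elems) →
        ∃ m' : MaxChain (LowerSet γ), labelSeq lab m'.elems = l) ∧
      (∀ m m' : MaxChain (LowerSet γ),
        labelSeq lab m.elems = labelSeq lab m'.elems → m = m') ∧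
      (∀ m m' : MaxChain (LowerSet γ),
        ELCDLe lab m m' ↔
          InvW (labelSeq lab m.elems) ⊆ InvW (labelSeq lab m'.elems)) := by
  classical
  set f : Fin n → γ := ⇑(Equiv.ofBijective e hbij).symm with hfdef
  have hfe : ∀ x : γ, f (e x) = x := fun x => (Equiv.ofBijective e hbij).symm_apply_apply x
  have hef : ∀ a : Fin n, e (f a) = a := fun a => (Equiv.ofBijective e hbij).apply_symm_apply a
  have hml : ∀ (m : MaxChain (LowerSet γ)) (a : Fin n), a ∈ labelSeq lab m.elems :=
    S19.labels_mem hlab hef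
  have hnd : ∀ m : MaxChain (LowerSet γ), (labelSeq lab m.elems).Nodup :=
    S19.labels_nodup hlab hfe
  have hperm : ∀ m : MaxChain (LowerSet γ), List.Perm (labelSeq lab m.elems) (List.finRange n) := by
    intro m
    refine List.perm_of_nodup_nodup_toFinset_eq (hnd m) (List.nodup_finRange n) ?_
    apply Finset.ext
    intro a
    simp [List.mem_toFinset, List.mem_finRange, hml m a]
  have hrealize : ∀ (m' : MaxChain (LowerSet γ)) (l : List (Fin n)), (∀ a, a ∈ l) → l.Nodup →
      InvW l ⊆ InvW (labelSeq lab m'.elems) → ∃ m₁ : MaxChain (LowerSet γ), labelSeq lab m₁.elems = l := by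
    intro m' l hl1 hl2 hsub
    refine S19.realize hlab hfe hef hmono l hl1 hl2 ?_
    intro a b hab hne
    have hab' : a < b := by
      have h0 := hmono (f a) (f b) hab
      rw [hef, hef] at h0
      exact lt_of_le_of_ne h0 hne
    by_contra hcon
    have hne' : l.idxOf a ≠ l.idxOf b :=
      fun h => hne ((List.idxOf_inj (hl1 a)).mp h)
    have hlt : l.idxOf b < l.idxOf a := by omega
    have h2 := (S19.mem_invW_fin.mp (hsub (S19.mem_invW_fin.mpr ⟨hl1 a, hl1 b, hab', hlt⟩))).2.2.2
    have h4 := S19.ext_prop hlab hfe hef m' a b hab hne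
    omega
  have move_sub : ∀ m m₁ : MaxChain (LowerSet γ), ELPolygonMove lab m m₁ →
      InvW (labelSeq lab m.elems) ⊆ InvW (labelSeq lab m₁.elems) := by
    intro m m₁ hmv
    obtain ⟨A, B, p, q, hpq, d1, d2⟩ := S19.move_decomp hlab hmv
    rw [d1, d2, S19.invW_swap hpq (by rw [← d1]; exact hnd m)]
    exact Set.subset_union_left
  have back : ∀ k : ℕ, ∀ m m' : MaxChain (LowerSet γ),
      (InvW (labelSeq lab m'.elems) \ InvW (labelSeq lab m.elems)).ncard ≤ k →
      InvW (labelSeq lab m.elems) ⊆ InvW (labelSeq lab m'.elems) → ELCDLe lab m m' := by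
    have base : ∀ m m' : MaxChain (LowerSet γ),
        InvW (labelSeq lab m'.elems) ⊆ InvW (labelSeq lab m.elems) →
        InvW (labelSeq lab m.elems) ⊆ InvW (labelSeq lab m'.elems) → ELCDLe lab m m' := by
      intro m m' hba hab
      have heq : labelSeq lab m.elems = labelSeq lab m'.elems :=
        S19.eq_of_invW (hnd m) (hnd m') (fun z => iff_of_true (hml m z) (hml m' z))
          (subset_antisymm hab hba)
      rw [S19.chain_eq_of_labels hlab hfe heq]
      exact Relation.ReflTransGen.refl
    intro k
    induction k with
    | zero =>
      intro m m' hk hsub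
      have hempty : InvW (labelSeq lab m'.elems) \ InvW (labelSeq lab m.elems) = ∅ :=
        (Set.ncard_eq_zero (Set.toFinite _)).mp (by omega)
      exact base m m' (Set.diff_eq_empty.mp hempty) hsub
    | succ k ih =>
      intro m m' hk hsub
      by_cases hd : InvW (labelSeq lab m'.elems) ⊆ InvW (labelSeq lab m.elems)
      · exact base m m' hd hsub
      · obtain ⟨z, hz1, hz2⟩ := Set.not_subset.mp hd
        obtain ⟨a, b⟩ := z
        obtain ⟨A, p, q, B, hdec, hpq, hpq', hpqn⟩ :=
          S19.exists_adjacent' (hnd m) (hml m) (hml m') hsub hz1 hz2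
        have hndl : (A ++ p :: q :: B).Nodup := by rw [← hdec]; exact hnd m
        have hswap : InvW (A ++ q :: p :: B)
            = InvW (labelSeq lab m.elems) ∪ {(p, q)} := by
          rw [S19.invW_swap hpq hndl, hdec]
        have hsub₁ : InvW (A ++ q :: p :: B) ⊆ InvW (labelSeq lab m'.elems) := by
          rw [hswap]
          rintro u (hu | hu)
          · exact hsub hu
          · rw [Set.mem_singleton_iff.mp hu]
            exact hpq'
        have hperm₁ : List.Perm (labelSeq lab m.elems) (A ++ q :: p :: B) := by
          rw [hdec]
          exact (List.Perm.swap q p B).append_left A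
        obtain ⟨m₁, hm₁⟩ := hrealize m' (A ++ q :: p :: B)
          (fun a' => hperm₁.subset (hml m a')) (hperm₁.nodup_iff.mp (hnd m)) hsub₁
        have hmv : ELPolygonMove lab m m₁ := S19.swap_move hlab hfe hef hpq hdec hm₁
        have hkey : InvW (labelSeq lab m₁.elems)
            = InvW (labelSeq lab m.elems) ∪ {(p, q)} := by rw [hm₁]; exact hswap
        have hsub₂ : InvW (labelSeq lab m₁.elems) ⊆ InvW (labelSeq lab m'.elems) := by
          rw [hm₁]; exact hsub₁
        have hcard₂ : (InvW (labelSeq lab m'.elems) \ InvW (labelSeq lab m₁.elems)).ncard ≤ k := by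
          have hss : InvW (labelSeq lab m'.elems) \ InvW (labelSeq lab m₁.elems)
              ⊂ InvW (labelSeq lab m'.elems) \ InvW (labelSeq lab m.elems) := by
            rw [Set.ssubset_def]
            constructor
            · intro u hu
              rw [hkey] at hu
              exact ⟨hu.1, fun hc => hu.2 (Or.inl hc)⟩
            · intro hcon
              have h2 := hcon ⟨hpq', hpqn⟩
              exact h2.2 (by rw [hkey]; exact Or.inr rfl)
          have := Set.ncard_lt_ncard hss (Set.toFinite _)
          omega
        exact Relation.ReflTransGen.head hmv (ih m₁ m' hcard₂ hsub₂)
  refine ⟨S19.isEL hlab hfe hmono, hperm, ?_, ?_, ?_⟩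
  · intro m l hp hsub
    exact hrealize m l (fun a => hp.mem_iff.mpr (List.mem_finRange a))
      (hp.nodup_iff.mpr (List.nodup_finRange n)) hsub
  · intro m m' h
    exact S19.chain_eq_of_labels hlab hfe h
  · intro m m'
    constructor
    · intro h
      induction h with
      | refl => exact subset_rfl
      | tail h₁ h₂ ih => exact ih.trans (move_sub _ _ h₂)
    · intro hsub
      exact back _ m m' le_rfl hsub
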